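/- arXiv:1407.7186 — 4 statements merged into one kernel-verified Lean document; each statement's English description precedes it below -/
import Mathlib

section
/- Let q_1, ..., q_r be multiplicatively independent nonzero integers and let Y ≥ 1. If a prime p does not divide q_1⋯q_r and the subgroup of (ℤ/pℤ)^× generated by the reductions of q_1, ..., q_r has at most Y elements, then there exist integers e_1', ..., e_r', not all zero, with |e_i'| ≤ Y^{1/r} for all i, such that p divides the numerator of the nonzero rational number q_1^{e_1'}⋯q_r^{e_r'} − 1. -/
/-- Nonzero integers `q 0, ..., q (r-1)` are multiplicatively independent:
`q 0 ^ e 0 * ⋯ * q (r-1) ^ e (r-1) = 1` with integer exponents forces all `e i = 0`. -/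
def MultIndep {r : ℕ} (q : Fin r → ℤ) : Prop :=
  ∀ e : Fin r → ℤ, (∏ i, (q i : ℚ) ^ (e i)) = 1 → e = 0

/-- The subgroup of `(ℤ/pℤ)ˣ` generated by the reductions of the `q i`. -/
def genSubgroup {r : ℕ} (q : Fin r → ℤ) (p : ℕ) : Subgroup (ZMod p)ˣ :=
  Subgroup.closure {x : (ZMod p)ˣ | ∃ i, (x : ZMod p) = ((q i : ℤ) : ZMod p)}

/-! Siegel's box principle: with `T = ⌊Y^{1/r}⌋` there are `(T + 1)^r > Y` exponent vectors
`a ∈ {0, …, T}^r`, so two of them, `a ≠ b`, give the same element `∏ qᵢ^{aᵢ}` of the subgroup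
generated modulo `p`. Then `e' = a - b` has `|e'ᵢ| ≤ T`, and `∏ qᵢ^{e'ᵢ} - 1 = (A - B) / B` with
`A = ∏ qᵢ^{aᵢ} ≡ B = ∏ qᵢ^{bᵢ} (mod p)` and `p ∤ B`, so `p` divides its numerator. Multiplicative
independence makes `∏ qᵢ^{e'ᵢ} ≠ 1`. -/

theorem Subgroup.exists_ne_prod_pow_eq_of_card_lt {G ι : Type*} [CommGroup G] [Fintype ι]
    (H : Subgroup G) [Finite H] {u : ι → G} (hu : ∀ i, u i ∈ H) {T : ℕ}
    (hT : Nat.card H < (T + 1) ^ Fintype.card ι) :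
    ∃ a b : ι → ℕ, a ≠ b ∧ (∀ i, a i ≤ T) ∧ (∀ i, b i ≤ T) ∧
      ∏ i, u i ^ a i = ∏ i, u i ^ b i := by
  let F : (ι → Fin (T + 1)) → H := fun a =>
    ⟨∏ i, u i ^ (a i : ℕ), H.prod_mem fun i _ => H.pow_mem (hu i) _⟩
  have hF : ¬ Function.Injective F := fun hinj =>
    (Nat.card_le_card_of_injective F hinj).not_gt
      (by rwa [Nat.card_fun, Nat.card_fin, Nat.card_eq_fintype_card (α := ι)])
  simp only [Function.Injective, not_forall] at hF
  obtain ⟨a, b, hab, hne⟩ := hF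
  exact ⟨fun i => a i, fun i => b i, fun h => hne (funext fun i => Fin.ext (congrFun h i)),
    fun i => Nat.lt_succ_iff.mp (a i).isLt, fun i => Nat.lt_succ_iff.mp (b i).isLt,
    congrArg Subtype.val hab⟩

theorem Real.lt_natFloor_rpow_inv_add_one_pow {Y : ℝ} (hY : 0 ≤ Y) {r : ℕ} (hr : r ≠ 0) :
    Y < ((⌊Y ^ (r⁻¹ : ℝ)⌋₊ + 1 : ℕ) : ℝ) ^ r := by
  calc Y = (Y ^ (r⁻¹ : ℝ)) ^ r := (Real.rpow_inv_natCast_pow hY hr).symm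
    _ < _ := by
      push_cast
      exact pow_lt_pow_left₀ (Nat.lt_floor_add_one _) (by positivity) hr

theorem Int.dvd_num_div_sub_one_of_intCast_eq {p : ℕ} [Fact p.Prime] {A B : ℤ}
    (hB : (B : ZMod p) ≠ 0) (hAB : (A : ZMod p) = B) :
    (p : ℤ) ∣ ((A : ℚ) / B - 1).num := by
  have hB0 : B ≠ 0 := by rintro rfl; simp at hB
  have hsub : (A : ℚ) / B - 1 = ((A - B : ℤ) : ℚ) / B := by
    field_simp
    push_cast
    ring
  rw [hsub]
  -- reducing `(A - B) / B` cancels a common factor `c`, which divides `B` and so is prime to `p`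
  obtain ⟨c, hc_num, hc_den⟩ := Rat.exists_eq_mul_div_num_and_eq_mul_div_den (A - B) hB0
  have hpc : ¬ (p : ℤ) ∣ c := fun h => hB <| by
    rw [ZMod.intCast_zmod_eq_zero_iff_dvd, hc_den]
    exact h.mul_right _
  have hpAB : (p : ℤ) ∣ c * (((A - B : ℤ) : ℚ) / B).num := by
    rw [← hc_num, ← ZMod.intCast_eq_intCast_iff_dvd_sub]
    exact hAB.symm
  exact ((Nat.prime_iff_prime_int.mp Fact.out).dvd_or_dvd hpAB).resolve_left hpc

theorem prod_zpow_natCast_sub {ι : Type*} [Fintype ι] {q : ι → ℤ} (hq : ∀ i, q i ≠ 0)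
    (a b : ι → ℕ) :
    ∏ i, (q i : ℚ) ^ ((a i : ℤ) - b i) =
      ((∏ i, q i ^ a i : ℤ) : ℚ) / (∏ i, q i ^ b i : ℤ) := by
  push_cast
  rw [← Finset.prod_div_distrib]
  refine Finset.prod_congr rfl fun i _ => ?_
  rw [zpow_sub₀ (by exact_mod_cast hq i), zpow_natCast, zpow_natCast]

theorem exists_ne_prod_pow_intCast_eq {r p : ℕ} [Fact p.Prime] {q : Fin r → ℤ}
    (hq : ∀ i, (q i : ZMod p) ≠ 0) {T : ℕ} (hT : Nat.card (genSubgroup q p) < (T + 1) ^ r) :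
    ∃ a b : Fin r → ℕ, a ≠ b ∧ (∀ i, a i ≤ T) ∧ (∀ i, b i ≤ T) ∧
      ((∏ i, q i ^ a i : ℤ) : ZMod p) = (∏ i, q i ^ b i : ℤ) := by
  let u : Fin r → (ZMod p)ˣ := fun i => Units.mk0 _ (hq i)
  have hu : ∀ i, u i ∈ genSubgroup q p := fun i => Subgroup.subset_closure ⟨i, rfl⟩
  obtain ⟨a, b, hab, ha, hb, hprod⟩ :=
    (genSubgroup q p).exists_ne_prod_pow_eq_of_card_lt hu (by rwa [Fintype.card_fin])
  refine ⟨a, b, hab, ha, hb, ?_⟩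
  have := congrArg (Units.coeHom (ZMod p)) hprod
  simpa [u] using this

theorem stmt0_general {r : ℕ} (hr : 0 < r) (q : Fin r → ℤ)
    (hind : MultIndep q) (Y : ℝ) (p : ℕ) (hp : p.Prime)
    (hpq : ¬ (p : ℤ) ∣ ∏ i, q i)
    (hcard : (Nat.card (genSubgroup q p) : ℝ) ≤ Y) :
    ∃ e' : Fin r → ℤ,
      e' ≠ 0 ∧
      (∀ i, (|e' i| : ℝ) ≤ Y ^ ((r : ℝ)⁻¹)) ∧
      (∏ i, (q i : ℚ) ^ (e' i)) ≠ 1 ∧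
      (p : ℤ) ∣ ((∏ i, (q i : ℚ) ^ (e' i)) - 1).num := by
  have : Fact p.Prime := ⟨hp⟩
  have hq : ∀ i, (q i : ZMod p) ≠ 0 := fun i h => hpq <|
    ((ZMod.intCast_zmod_eq_zero_iff_dvd _ _).mp h).trans (Finset.dvd_prod_of_mem _ (by simp))
  set T := ⌊Y ^ ((r : ℝ)⁻¹)⌋₊
  have hY : 0 ≤ Y := (Nat.cast_nonneg _).trans hcard
  obtain ⟨a, b, hab, ha, hb, hAB⟩ := exists_ne_prod_pow_intCast_eq hq (T := T) <| by
    exact_mod_cast hcard.trans_lt (Real.lt_natFloor_rpow_inv_add_one_pow hY hr.ne')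
  have he : (fun i => (a i : ℤ) - b i) ≠ 0 := fun h =>
    hab (funext fun i => by have := congrFun h i; simp at this; omega)
  refine ⟨fun i => (a i : ℤ) - b i, he, fun i => ?_, fun h => he (hind _ h), ?_⟩
  · have hT : |(a i : ℤ) - b i| ≤ T := abs_le.mpr ⟨by linarith [hb i], by linarith [ha i]⟩
    calc |(((a i : ℤ) - b i : ℤ) : ℝ)| ≤ (T : ℤ) := by exact_mod_cast hT
      _ ≤ _ := Nat.floor_le (by positivity)
  · rw [prod_zpow_natCast_sub (fun i h => hq i (by simp [h])) a b]
    exact Int.dvd_num_div_sub_one_of_intCast_eq (by simp [Finset.prod_ne_zero_iff, hq]) hAB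

theorem stmt0 {r : ℕ} (hr : 0 < r) (q : Fin r → ℤ) (hq : ∀ i, q i ≠ 0)
    (hind : MultIndep q) (Y : ℝ) (hY : 1 ≤ Y) (p : ℕ) (hp : p.Prime)
    (hpq : ¬ (p : ℤ) ∣ ∏ i, q i)
    (hcard : (Nat.card (genSubgroup q p) : ℝ) ≤ Y) :
    ∃ e' : Fin r → ℤ,
      e' ≠ 0 ∧
      (∀ i, (|e' i| : ℝ) ≤ Y ^ ((r : ℝ)⁻¹)) ∧
      (∏ i, (q i : ℚ) ^ (e' i)) ≠ 1 ∧
      (p : ℤ) ∣ ((∏ i, (q i : ℚ) ^ (e' i)) - 1).num :=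
  stmt0_general hr q hind Y p hp hpq hcard
end

section
/- Let q_1, ..., q_r be nonzero integers with the property (*): whenever e_0, e_1, ..., e_r are nonnegative integers such that (−3)^{e_0} q_1^{e_1}⋯q_r^{e_r} is a perfect square, the sum e_0 + e_1 + ⋯ + e_r is even. Then there exist infinitely many primes p with (−3/p) = (q_1/p) = ⋯ = (q_r/p) = −1. -/
/-- Condition (*) for nonzero integers `q 0, ..., q (r-1)`: whenever `e₀, e₁, ..., e_r` are
nonnegative integers such that `(-3)^e₀ * q₁^e₁ ⋯ q_r^e_r` is a perfect square, the sum
`e₀ + e₁ + ⋯ + e_r` is even. -/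
def StarCondition {r : ℕ} (q : Fin r → ℤ) : Prop :=
  ∀ (e₀ : ℕ) (e : Fin r → ℕ),
    IsSquare ((-3 : ℤ) ^ e₀ * ∏ i, (q i) ^ (e i)) → Even (e₀ + ∑ i, e i)

/-!
Write `ℚˣ/(ℚˣ)²` additively as the `𝔽₂`-vector space of signs and prime exponents mod 2.
Condition (*) says that every linear relation among the classes of `-3, q₁, …, q_r` has an even
number of terms, so by duality some linear functional `L` is `1` on all of them. Every such `L` is
realised by Legendre symbols: by quadratic reciprocity, the supplementary laws and the Chinese
remainder theorem, a suitable residue class forces `(-1/p)` and `(ℓ/p)`, for the finitely many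
primes `ℓ` involved, to be `(-1)^L` of the corresponding classes, and Dirichlet's theorem supplies
arbitrarily large primes `p` in that class. By multiplicativity, `(m/p) = (-1)^L(class of m)`
for every `m` built from these primes, in particular `(-3/p) = (qᵢ/p) = -1`.
-/

open Finset ZMod

theorem LinearMap.exists_comp_eq_of_ker_le {K V W U : Type*} [Field K] [AddCommGroup V]
    [Module K V] [AddCommGroup W] [Module K W] [AddCommGroup U] [Module K U]
    (T : V →ₗ[K] W) (σ : V →ₗ[K] U) (h : ker T ≤ ker σ) : ∃ L : W →ₗ[K] U, L ∘ₗ T = σ := by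
  obtain ⟨g, hg⟩ := ((ker T).liftQ T le_rfl).exists_leftInverse_of_injective
    ((ker T).ker_liftQ_eq_bot _ _ le_rfl)
  refine ⟨(ker T).liftQ σ h ∘ₗ g, LinearMap.ext fun x => ?_⟩
  have hx : g (T x) = (ker T).mkQ x := LinearMap.congr_fun hg ((ker T).mkQ x)
  simp [hx]

theorem exists_linearMap_apply_eq_one {K W ι : Type*} [Field K] [AddCommGroup W] [Module K W]
    [Fintype ι] (v : ι → W) (h : ∀ c : ι → K, ∑ i, c i • v i = 0 → ∑ i, c i = 0) :
    ∃ L : W →ₗ[K] K, ∀ i, L (v i) = 1 := by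
  classical
  obtain ⟨L, hL⟩ := (Fintype.linearCombination K v).exists_comp_eq_of_ker_le
    (Fintype.linearCombination K fun _ => (1 : K)) fun c hc => by
      simp only [LinearMap.mem_ker, Fintype.linearCombination_apply] at hc ⊢
      simpa using h c hc
  refine ⟨L, fun i => ?_⟩
  simpa [Fintype.linearCombination_apply] using LinearMap.congr_fun hL (Pi.single i 1)

theorem Nat.isSquare_of_forall_even_factorization {n : ℕ} (h : ∀ p, Even (n.factorization p)) :
    IsSquare n := by
  rcases eq_or_ne n 0 with rfl | hn
  · exact IsSquare.zero
  set f := n.factorization.mapRange (· / 2) (Nat.zero_div 2)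
  have hf : ∀ p ∈ f.support, p.Prime := fun p hp =>
    Nat.prime_of_mem_primeFactors (Finsupp.support_mapRange hp)
  have hm : f.prod (· ^ ·) ≠ 0 :=
    Finsupp.prod_ne_zero_iff.2 fun p hp => pow_ne_zero _ (hf p hp).ne_zero
  refine ⟨f.prod (· ^ ·), Nat.eq_of_factorization_eq hn (mul_ne_zero hm hm) fun p => ?_⟩
  rw [← sq, Nat.factorization_pow, Nat.prod_pow_factorization_eq_self hf]
  obtain ⟨k, hk⟩ := h p
  simp only [hk, Finsupp.coe_smul, Pi.smul_apply, Finsupp.mapRange_apply, smul_eq_mul, f]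
  omega

/-- `ℚˣ/(ℚˣ)²`, written additively: the sign bit and the exponents of the primes mod 2. -/
abbrev SquareClass : Type := ZMod 2 × (ℕ →₀ ZMod 2)

noncomputable def squareClass (m : ℤ) : SquareClass :=
  (if m < 0 then 1 else 0, m.natAbs.factorization.mapRange (↑) Nat.cast_zero)

theorem squareClass_mul {m n : ℤ} (hm : m ≠ 0) (hn : n ≠ 0) :
    squareClass (m * n) = squareClass m + squareClass n := by
  ext ℓ
  · rcases hm.lt_or_gt with hm | hm <;> rcases hn.lt_or_gt with hn | hn <;>
      simp [squareClass, hm, hn, hm.not_gt, hn.not_gt, mul_neg_iff, CharTwo.add_self_eq_zero]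
  · simp [squareClass, Int.natAbs_mul,
      Nat.factorization_mul (Int.natAbs_ne_zero.2 hm) (Int.natAbs_ne_zero.2 hn)]

theorem squareClass_one : squareClass 1 = 0 := by
  simp [squareClass]

theorem squareClass_pow {m : ℤ} (hm : m ≠ 0) (k : ℕ) : squareClass (m ^ k) = k • squareClass m := by
  induction k with
  | zero => simp [squareClass_one]
  | succ k ih => rw [pow_succ, squareClass_mul (pow_ne_zero k hm) hm, ih, succ_nsmul]

theorem squareClass_prod {ι : Type*} (s : Finset ι) {n : ι → ℤ} (hn : ∀ i ∈ s, n i ≠ 0) :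
    squareClass (∏ i ∈ s, n i) = ∑ i ∈ s, squareClass (n i) := by
  induction s using Finset.cons_induction with
  | empty => simp [squareClass_one]
  | cons a s _ ih =>
    rw [Finset.forall_mem_cons] at hn
    rw [Finset.prod_cons, Finset.sum_cons, squareClass_mul hn.1 (Finset.prod_ne_zero_iff.2 hn.2),
      ih hn.2]

theorem isSquare_of_squareClass_eq_zero {m : ℤ} (h : squareClass m = 0) : IsSquare m := by
  have hm : 0 ≤ m := by
    by_contra hm
    simpa [squareClass, not_le.1 hm] using congrArg Prod.fst h
  rw [← Int.natAbs_of_nonneg hm, Int.isSquare_natCast_iff]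
  refine Nat.isSquare_of_forall_even_factorization fun ℓ => ?_
  simpa [squareClass, ZMod.natCast_eq_zero_iff_even] using congrArg (fun v => v.2 ℓ) h

theorem legendreSym_eq_neg_one_pow_mul {p ℓ : ℕ} [Fact p.Prime] [Fact ℓ.Prime] (hp : p ≠ 2)
    (hℓ : ℓ ≠ 2) : legendreSym p ℓ = legendreSym p (-1) ^ (ℓ / 2) * legendreSym ℓ p := by
  rw [legendreSym.quadratic_reciprocity' hℓ hp, legendreSym.at_neg_one hp,
    χ₄_eq_neg_one_pow (Nat.odd_iff.1 ((Fact.out : p.Prime).odd_of_ne_two hp)), ← pow_mul]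
  ring

theorem exists_legendreSym_eq (ℓ : ℕ) [Fact ℓ.Prime] (hℓ : ℓ ≠ 2) (u : ℤˣ) :
    ∃ b : ℕ, legendreSym ℓ b = u := by
  rcases Int.units_eq_one_or u with rfl | rfl
  · exact ⟨1, by simp⟩
  · obtain ⟨x, hx⟩ := quadraticChar_exists_neg_one (F := ZMod ℓ) (by rwa [ZMod.ringChar_zmod_n])
    refine ⟨x.val, ?_⟩
    simpa [legendreSym] using hx

theorem exists_modEq_odd_prime_legendreSym_eq {ℓ : ℕ} (hℓ : ℓ.Prime) (hℓ2 : ℓ ≠ 2) (ε u : ℤˣ) :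
    ∃ b : ℕ, b.Coprime ℓ ∧ ∀ p [Fact p.Prime], p ≠ 2 → p ≡ b [MOD ℓ] →
      legendreSym p (-1) = ε → legendreSym p ℓ = u := by
  have := Fact.mk hℓ
  obtain ⟨b, hb⟩ := exists_legendreSym_eq ℓ hℓ2 (ε ^ (ℓ / 2) * u)
  have hb0 : ¬ ℓ ∣ b := fun hdvd => (ε ^ (ℓ / 2) * u).ne_zero <| by
    rw [← hb, legendreSym.eq_zero_iff]
    exact_mod_cast (ZMod.natCast_eq_zero_iff b ℓ).2 hdvd
  refine ⟨b, Nat.coprime_comm.1 (hℓ.coprime_iff_not_dvd.2 hb0), fun p _ hp2 hpb hε => ?_⟩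
  have hpℓ : legendreSym ℓ p = legendreSym ℓ b := by
    simp only [legendreSym, Int.cast_natCast, (ZMod.natCast_eq_natCast_iff p b ℓ).2 hpb]
  rw [legendreSym_eq_neg_one_pow_mul hp2 hℓ2, hpℓ, hb, hε, ← Units.val_pow_eq_pow_val,
    ← Units.val_mul, ← mul_assoc, ← pow_add, ← two_mul, pow_mul, Int.units_sq, one_pow, one_mul]

theorem exists_modEq_eight_legendreSym_eq (ε δ : ℤˣ) :
    ∃ a : ℕ, a.Coprime 8 ∧ ∀ p [Fact p.Prime], p ≡ a [MOD 8] →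
      legendreSym p (-1) = ε ∧ legendreSym p 2 = δ := by
  suffices ∃ a : ℕ, a.Coprime 8 ∧ χ₄ a = ε ∧ χ₈ a = δ by
    obtain ⟨a, ha, h₄, h₈⟩ := this
    refine ⟨a, ha, fun p _ hpa => ?_⟩
    have hp2 : p ≠ 2 := by
      rintro rfl
      exact absurd (hpa.gcd_eq.trans ha) (by decide)
    rw [legendreSym.at_neg_one hp2, legendreSym.at_two hp2, ← h₄, ← h₈,
      (ZMod.natCast_eq_natCast_iff p a 8).2 hpa,
      (ZMod.natCast_eq_natCast_iff p a 4).2 (hpa.of_dvd (by norm_num))]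
    exact ⟨rfl, rfl⟩
  rcases Int.units_eq_one_or ε with rfl | rfl <;> rcases Int.units_eq_one_or δ with rfl | rfl
  exacts [⟨1, by decide⟩, ⟨5, by decide⟩, ⟨7, by decide⟩, ⟨3, by decide⟩]

theorem Nat.exists_prime_gt_forall_modEq {ι : Type*} (t : Finset ι) (m a : ι → ℕ)
    (hm : ∀ i ∈ t, m i ≠ 0) (hmt : Set.Pairwise t (Function.onFun Nat.Coprime m))
    (ha : ∀ i ∈ t, (a i).Coprime (m i)) (N : ℕ) :
    ∃ p, N < p ∧ p.Prime ∧ ∀ i ∈ t, p ≡ a i [MOD m i] := by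
  obtain ⟨k, hk⟩ := Nat.chineseRemainderOfFinset a m t hm hmt
  have : NeZero (∏ i ∈ t, m i) := ⟨prod_ne_zero_iff.2 hm⟩
  have hunit : IsUnit (k : ZMod (∏ i ∈ t, m i)) := (ZMod.isUnit_iff_coprime _ _).2 <|
    Nat.Coprime.prod_right fun i hi => (hk i hi).gcd_eq.trans (ha i hi)
  obtain ⟨p, hpN, hp, hpk⟩ := Nat.forall_exists_prime_gt_and_eq_mod hunit N
  exact ⟨p, hpN, hp, fun i hi =>
    (((ZMod.natCast_eq_natCast_iff _ _ _).1 hpk).of_dvd (dvd_prod_of_mem m hi)).trans (hk i hi)⟩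

theorem exists_prime_legendreSym_eq (S : Finset ℕ) (hS : ∀ ℓ ∈ S, ℓ.Prime) (ε : ℤˣ) (t : ℕ → ℤˣ)
    (N : ℕ) : ∃ p, N < p ∧ ∃ _ : Fact p.Prime,
      legendreSym p (-1) = ε ∧ ∀ ℓ ∈ S, legendreSym p ℓ = t ℓ := by
  obtain ⟨a₈, ha₈, h₈⟩ := exists_modEq_eight_legendreSym_eq ε (t 2)
  have hodd : ∀ ℓ ∈ S.erase 2, ∃ b : ℕ, b.Coprime ℓ ∧ ∀ p [Fact p.Prime], p ≠ 2 →
      p ≡ b [MOD ℓ] → legendreSym p (-1) = ε → legendreSym p ℓ = t ℓ := fun ℓ hℓ =>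
    exists_modEq_odd_prime_legendreSym_eq (hS ℓ (mem_of_mem_erase hℓ)) (ne_of_mem_erase hℓ) ε (t ℓ)
  choose! b hb hbt using hodd
  have hS₂ : ∀ ℓ ∈ insert 2 S, ℓ.Prime := forall_mem_insert _ _ _ |>.2 ⟨Nat.prime_two, hS⟩
  -- modulo `2 ^ 3` the class of `p` fixes `(-1/p)` and `(2/p)`; for odd `ℓ` only `p mod ℓ` matters
  obtain ⟨p, hpN, hp, hpa⟩ := Nat.exists_prime_gt_forall_modEq (insert 2 S) (· ^ 3)
    (Function.update b 2 a₈) (fun ℓ hℓ => pow_ne_zero 3 (hS₂ ℓ hℓ).ne_zero)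
    (fun ℓ hℓ ℓ' hℓ' hne => ((Nat.coprime_primes (hS₂ ℓ hℓ) (hS₂ ℓ' hℓ')).2 hne).pow 3 3)
    (fun ℓ hℓ => by
      rcases eq_or_ne ℓ 2 with rfl | hℓ2
      · simpa using ha₈
      · rw [Function.update_of_ne hℓ2]
        exact (hb ℓ (mem_erase.2 ⟨hℓ2, (mem_insert.1 hℓ).resolve_left hℓ2⟩)).pow_right 3) N
  have := Fact.mk hp
  have hp₈ : p ≡ a₈ [MOD 8] := by simpa using hpa 2 (mem_insert_self 2 S)
  obtain ⟨hε, h₂⟩ := h₈ p hp₈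
  have hp2 : p ≠ 2 := by
    rintro rfl
    exact absurd (hp₈.gcd_eq.trans ha₈) (by decide)
  refine ⟨p, hpN, this, hε, fun ℓ hℓ => ?_⟩
  rcases eq_or_ne ℓ 2 with rfl | hℓ2
  · exact h₂
  · refine hbt ℓ (mem_erase.2 ⟨hℓ2, hℓ⟩) p hp2 ?_ hε
    simpa [Function.update_of_ne hℓ2] using
      (hpa ℓ (mem_insert_of_mem hℓ)).of_dvd (dvd_pow_self ℓ three_ne_zero)

noncomputable def quadraticSign (L : SquareClass →ₗ[ZMod 2] ZMod 2) (m : ℤ) : ℤˣ :=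
  (-1) ^ L (squareClass m)

theorem quadraticSign_mul (L : SquareClass →ₗ[ZMod 2] ZMod 2) {m n : ℤ} (hm : m ≠ 0)
    (hn : n ≠ 0) : quadraticSign L (m * n) = quadraticSign L m * quadraticSign L n := by
  rw [quadraticSign, squareClass_mul hm hn, map_add, uzpow_add, quadraticSign, quadraticSign]

theorem legendreSym_natCast_eq_quadraticSign (p : ℕ) [Fact p.Prime]
    (L : SquareClass →ₗ[ZMod 2] ZMod 2) {n : ℕ} (hn : n ≠ 0)
    (h : ∀ ℓ ∈ n.primeFactors, legendreSym p ℓ = quadraticSign L ℓ) :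
    legendreSym p n = quadraticSign L n := by
  induction n using induction_on_primes with
  | zero => exact absurd rfl hn
  | one => simp [quadraticSign, squareClass_one]
  | prime_mul ℓ a hℓ ih =>
    have ha : a ≠ 0 := right_ne_zero_of_mul hn
    rw [Nat.primeFactors_mul hℓ.ne_zero ha] at h
    push_cast
    rw [legendreSym.mul, quadraticSign_mul L (by exact_mod_cast hℓ.ne_zero) (by exact_mod_cast ha),
      Units.val_mul, h ℓ (mem_union_left _ (by simp [hℓ.primeFactors])),
      ih ha fun q hq => h q (mem_union_right _ hq)]

theorem legendreSym_eq_quadraticSign (p : ℕ) [Fact p.Prime] (L : SquareClass →ₗ[ZMod 2] ZMod 2)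
    {m : ℤ} (hm : m ≠ 0) (hneg : legendreSym p (-1) = quadraticSign L (-1))
    (h : ∀ ℓ ∈ m.natAbs.primeFactors, legendreSym p ℓ = quadraticSign L ℓ) :
    legendreSym p m = quadraticSign L m := by
  have habs := legendreSym_natCast_eq_quadraticSign p L (Int.natAbs_ne_zero.2 hm) h
  rcases Int.natAbs_eq m with hm' | hm' <;> rw [hm']
  · exact habs
  · rw [neg_eq_neg_one_mul, legendreSym.mul, quadraticSign_mul L (by norm_num)
      (by exact_mod_cast Int.natAbs_ne_zero.2 hm), Units.val_mul, hneg, habs]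

theorem sum_eq_zero_of_isSquare_imp_even {ι : Type*} [Fintype ι] {n : ι → ℤ}
    (hn : ∀ i, n i ≠ 0) (h : ∀ e : ι → ℕ, IsSquare (∏ i, n i ^ e i) → Even (∑ i, e i))
    (c : ι → ZMod 2) (hc : ∑ i, c i • squareClass (n i) = 0) : ∑ i, c i = 0 := by
  have hsq : IsSquare (∏ i, n i ^ (c i).val) := by
    refine isSquare_of_squareClass_eq_zero ?_
    rw [squareClass_prod _ fun i _ => pow_ne_zero _ (hn i)]
    simpa [squareClass_pow (hn _), ← Nat.cast_smul_eq_nsmul (ZMod 2)] using hc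
  simpa [← ZMod.natCast_eq_zero_iff_even] using h _ hsq

theorem stmt3 {r : ℕ} (q : Fin r → ℤ) (hq : ∀ i, q i ≠ 0)
    (hstar : StarCondition q) :
    ∀ N : ℕ, ∃ p : ℕ, N < p ∧ ∃ _ : Fact p.Prime,
      legendreSym p (-3) = -1 ∧ ∀ i, legendreSym p (q i) = -1 := by
  intro N
  set n : Fin (r + 1) → ℤ := Fin.cons (-3) q
  have hn : ∀ i, n i ≠ 0 := Fin.cases (by simp [n]) (by simpa [n] using hq)
  obtain ⟨L, hL⟩ := exists_linearMap_apply_eq_one (fun i => squareClass (n i))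
    (sum_eq_zero_of_isSquare_imp_even hn fun e he => by
      simpa [Fin.sum_univ_succ] using
        hstar (e 0) (fun j => e j.succ) (by simpa [Fin.prod_univ_succ, n] using he))
  obtain ⟨p, hpN, hp, hneg, hS⟩ := exists_prime_legendreSym_eq
    (univ.biUnion fun i => (n i).natAbs.primeFactors)
    (fun ℓ hℓ => by
      obtain ⟨i, -, hℓ⟩ := mem_biUnion.1 hℓ
      exact Nat.prime_of_mem_primeFactors hℓ) (quadraticSign L (-1)) (quadraticSign L ·) N
  have key : ∀ i, legendreSym p (n i) = -1 := fun i => by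
    rw [legendreSym_eq_quadraticSign p L (hn i) hneg
      fun ℓ hℓ => hS ℓ (mem_biUnion.2 ⟨i, mem_univ i, hℓ⟩), quadraticSign, hL]
    rfl
  exact ⟨p, hpN, hp, key 0, fun i => key i.succ⟩
end

section
/- Let q_1, ..., q_r be nonzero integers satisfying condition (*), and set v = 16 ∏_{ℓ | q_1⋯q_r, ℓ > 2} ℓ (product over odd primes dividing q_1⋯q_r). Then there exists an integer u coprime to v such that: (1) every prime p ≡ u (mod v) satisfies (q_1/p) = ⋯ = (q_r/p) = −1; and (2) if T is the largest power of 2 dividing u − 1, then T ∈ {2, 4, 8} and gcd((u−1)/T, v) = 1. -/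
/-!
For odd `n` and nonzero `a`, `(a/n) = (-1/n)^[a < 0] * ∏ (ℓ/n)^{v_ℓ(a)}`. So if the symbols
`(-1/p)` and `(ℓ/p)` are prescribed as `(-1)^{t_k}`, the requirement `(q_i/p) = -1` becomes the
linear system `⟨vec q_i, t⟩ = 1` over `𝔽₂`, where `vec a` is the sign bit of `a` followed by its
exponents mod 2. By duality this system is solvable unless some combination of rows vanishes
while having odd weight; a vanishing combination makes `(-3)^e₀ * ∏ q_i^e_i` a square, so
condition (*) rules this out. The row of `-3` is added because it forces `(u/3) = -1`, i.e.
`u ≢ 0, 1 (mod 3)`, which is what (2) needs at `ℓ = 3`; at the other odd `ℓ ∣ v` there is a residue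
with either symbol avoiding `0` and `1`. The solution `t` is then realized by a class `u mod v`:
`u mod 16` fixes `χ₄`, `χ₈` and the power of `2` in `u - 1`, and `u mod ℓ` fixes `(ℓ/p)` through
quadratic reciprocity.
-/

open ZMod
open scoped NumberTheorySymbols

theorem LinearMap.exists_apply_eq_of_forall_dotProduct {K V ι : Type*} [Field K]
    [AddCommGroup V] [Module K V] [Fintype ι] [DecidableEq ι] (Φ : V →ₗ[K] ι → K) (b : ι → K)
    (h : ∀ c : ι → K, (∀ v, c ⬝ᵥ Φ v = 0) → c ⬝ᵥ b = 0) : ∃ v, Φ v = b := by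
  by_contra hb
  obtain ⟨f, hfb, hf⟩ := Submodule.exists_dual_map_eq_bot_of_notMem (p := LinearMap.range Φ)
    (x := b) (by simpa [eq_comm] using hb) inferInstance
  let c : ι → K := fun i => f fun j => if i = j then 1 else 0
  have hc : ∀ w, f w = c ⬝ᵥ w := fun w => by
    rw [f.pi_apply_eq_sum_univ]
    exact Finset.sum_congr rfl fun i _ => by rw [smul_eq_mul, mul_comm]
  refine hfb ((hc b).trans (h c fun v => ?_))
  rw [← hc]
  exact (Submodule.mem_bot K).mp (hf ▸ Submodule.mem_map_of_mem (LinearMap.mem_range_self Φ v))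

def signOf (s : ZMod 2) : ℤ := if s = 0 then 1 else -1

@[simp] lemma signOf_zero : signOf 0 = 1 := rfl

@[simp] lemma signOf_one : signOf 1 = -1 := rfl

lemma signOf_add (s s' : ZMod 2) : signOf (s + s') = signOf s * signOf s' := by
  revert s s'; decide

lemma signOf_pow (s : ZMod 2) (n : ℕ) : signOf s ^ n = signOf (n * s) := by
  induction n with
  | zero => simp
  | succ n ih => rw [pow_succ, ih, ← signOf_add]; push_cast; ring_nf

lemma signOf_sum {ι : Type*} (s : Finset ι) (f : ι → ZMod 2) :
    signOf (∑ i ∈ s, f i) = ∏ i ∈ s, signOf (f i) := by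
  classical
  induction s using Finset.induction with
  | empty => simp
  | insert i s hi ih => rw [Finset.sum_insert hi, Finset.prod_insert hi, signOf_add, ih]

def negBit (a : ℤ) : ZMod 2 := if a < 0 then 1 else 0

lemma negBit_mul {a b : ℤ} (ha : a ≠ 0) (hb : b ≠ 0) : negBit (a * b) = negBit a + negBit b := by
  rcases ha.lt_or_gt with ha | ha <;> rcases hb.lt_or_gt with hb | hb <;>
    simp [negBit, mul_neg_iff, ha, hb, ha.not_gt, hb.not_gt]
  all_goals decide

/-- `expPairing a t` is the value at `a` of the homomorphism `ℤ ∖ {0} → ZMod 2` sending `-1` to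
`t none` and each prime `ℓ` to `t (some ℓ)`, i.e. the pairing of `t` with the vector of `a`
formed by its sign bit and its prime exponents. -/
noncomputable def expPairing (a : ℤ) : (Option ℕ → ZMod 2) →ₗ[ZMod 2] ZMod 2 :=
  negBit a • LinearMap.proj none +
    a.natAbs.factorization.sum fun ℓ e => (e : ZMod 2) • LinearMap.proj (some ℓ)

lemma expPairing_apply (a : ℤ) (t : Option ℕ → ZMod 2) :
    expPairing a t = negBit a * t none +
      ∑ ℓ ∈ a.natAbs.primeFactors, a.natAbs.factorization ℓ * t (some ℓ) := by
  simp [expPairing, Finsupp.sum]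

lemma expPairing_mul {a b : ℤ} (ha : a ≠ 0) (hb : b ≠ 0) :
    expPairing (a * b) = expPairing a + expPairing b := by
  have hfac : (a * b).natAbs.factorization = a.natAbs.factorization + b.natAbs.factorization := by
    rw [Int.natAbs_mul, Nat.factorization_mul (Int.natAbs_ne_zero.mpr ha)
      (Int.natAbs_ne_zero.mpr hb)]
  rw [expPairing, expPairing, expPairing, negBit_mul ha hb, hfac,
    Finsupp.sum_add_index' (by simp) (by simp [add_smul])]
  module

lemma expPairing_pow {a : ℤ} (ha : a ≠ 0) (n : ℕ) :
    expPairing (a ^ n) = (n : ZMod 2) • expPairing a := by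
  induction n with
  | zero => ext t; simp [expPairing_apply, negBit]
  | succ n ih => rw [pow_succ, expPairing_mul (pow_ne_zero n ha) ha, ih]; push_cast; module

lemma expPairing_prod {ι : Type*} (s : Finset ι) {f : ι → ℤ} (hf : ∀ i ∈ s, f i ≠ 0) :
    expPairing (∏ i ∈ s, f i) = ∑ i ∈ s, expPairing (f i) := by
  classical
  induction s using Finset.induction with
  | empty => ext t; simp [expPairing_apply, negBit]
  | insert i s hi ih =>
    rw [Finset.prod_insert hi, Finset.sum_insert hi, expPairing_mul (hf i (by simp))
      (Finset.prod_ne_zero_iff.mpr fun j hj => hf j (by simp [hj])),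
      ih fun j hj => hf j (by simp [hj])]

lemma isSquare_of_expPairing_eq_zero {a : ℤ} (ha : a ≠ 0) (h : expPairing a = 0) :
    IsSquare a := by
  have hpos : 0 ≤ a := by
    simpa [expPairing_apply, negBit] using LinearMap.congr_fun h (Pi.single none 1)
  have heven : ∀ ℓ, Even (a.natAbs.factorization ℓ) := by
    intro ℓ
    have := LinearMap.congr_fun h (Pi.single (some ℓ) 1)
    simp [expPairing_apply, negBit, Pi.single_apply] at this
    rw [← ZMod.natCast_eq_zero_iff_even]
    by_cases h0 : a.natAbs.factorization ℓ = 0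
    · simp [h0]
    · obtain ⟨hp, hd, -⟩ := by simpa [Nat.factorization_eq_zero_iff, not_or] using h0
      exact this hp hd ha
  have hsq : a.natAbs = (∏ ℓ ∈ a.natAbs.primeFactors, ℓ ^ (a.natAbs.factorization ℓ / 2)) ^ 2 := by
    rw [← Finset.prod_pow]
    conv_lhs => rw [← Nat.prod_factorization_pow_eq_self (Int.natAbs_ne_zero.mpr ha)]
    exact Finset.prod_congr rfl fun ℓ _ => by rw [← pow_mul, Nat.div_mul_cancel (heven ℓ).two_dvd]
  exact ⟨_, by rw [← Int.natAbs_of_nonneg hpos, hsq]; push_cast; ring⟩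

lemma exists_expPairing_eq_one {ι : Type*} [Fintype ι] (a : ι → ℤ) (ha : ∀ i, a i ≠ 0)
    (h : ∀ e : ι → ℕ, IsSquare (∏ i, a i ^ e i) → Even (∑ i, e i)) :
    ∃ t, ∀ i, expPairing (a i) t = 1 := by
  classical
  suffices ∃ t, (LinearMap.pi fun i => expPairing (a i)) t = 1 by
    obtain ⟨t, ht⟩ := this
    exact ⟨t, fun i => congr_fun ht i⟩
  refine LinearMap.exists_apply_eq_of_forall_dotProduct _ _ fun c hc => ?_
  have hN : expPairing (∏ i, a i ^ (c i).val) = 0 := by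
    refine LinearMap.ext fun t => ?_
    rw [expPairing_prod _ fun i _ => pow_ne_zero _ (ha i), LinearMap.sum_apply]
    simpa [expPairing_pow (ha _), dotProduct, ZMod.cast_id'] using hc t
  have heven := h _ (isSquare_of_expPairing_eq_zero
    (Finset.prod_ne_zero_iff.mpr fun i _ => pow_ne_zero _ (ha i)) hN)
  calc c ⬝ᵥ 1 = ((∑ i, (c i).val : ℕ) : ZMod 2) := by simp [dotProduct]
    _ = 0 := ZMod.natCast_eq_zero_iff_even.mpr heven

lemma jacobiSym_prod_left {ι : Type*} (s : Finset ι) (f : ι → ℤ) (n : ℕ) :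
    J(∏ i ∈ s, f i | n) = ∏ i ∈ s, J(f i | n) :=
  map_prod (⟨⟨fun a => J(a | n), jacobiSym.one_left n⟩, fun a b => jacobiSym.mul_left a b n⟩ :
    ℤ →* ℤ) f s

lemma jacobiSym_eq_signOf_expPairing {a : ℤ} (ha : a ≠ 0) {n : ℕ} {t : Option ℕ → ZMod 2}
    (hneg : J(-1 | n) = signOf (t none))
    (hprime : ∀ ℓ ∈ a.natAbs.primeFactors, J(ℓ | n) = signOf (t (some ℓ))) :
    J(a | n) = signOf (expPairing a t) := by
  have habs : J(a.natAbs | n) =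
      signOf (∑ ℓ ∈ a.natAbs.primeFactors, a.natAbs.factorization ℓ * t (some ℓ)) := by
    conv_lhs => rw [← Nat.prod_factorization_pow_eq_self (Int.natAbs_ne_zero.mpr ha)]
    rw [Finsupp.prod, Nat.support_factorization, Nat.cast_prod, jacobiSym_prod_left, signOf_sum]
    refine Finset.prod_congr rfl fun ℓ hℓ => ?_
    rw [Nat.cast_pow, jacobiSym.pow_left, hprime ℓ hℓ, signOf_pow]
  rw [expPairing_apply, signOf_add, ← habs]
  rcases ha.lt_or_gt with h | h
  · rw [negBit, if_pos h, one_mul, ← hneg, ← jacobiSym.mul_left, Int.ofNat_natAbs_of_nonpos h.le]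
    ring_nf
  · rw [negBit, if_neg h.not_gt, zero_mul, signOf_zero, one_mul, Int.natAbs_of_nonneg h.le]

lemma jacobiSym_eq_signOf_of_modEq {ℓ n : ℕ} (hℓ : Odd ℓ) (hn : Odd n) {y : ℤ}
    (hny : (n : ℤ) ≡ y [ZMOD ℓ]) {s s₄ : ZMod 2} (h₄ : χ₄ n = signOf s₄)
    (hy : J(y | ℓ) = signOf (s + (ℓ / 2 : ℕ) * s₄)) :
    J(ℓ | n) = signOf s := by
  rw [jacobiSym.quadratic_reciprocity hℓ hn, mul_comm (ℓ / 2), pow_mul,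
    ← ZMod.χ₄_eq_neg_one_pow (Nat.odd_iff.mp hn), h₄, jacobiSym.mod_left' hny, hy, signOf_pow,
    ← signOf_add, add_left_comm, CharTwo.add_self_eq_zero, add_zero]

lemma jacobiSym_eq_signOf_of_modEq_sixteen_mul_prod {P : Finset ℕ}
    (hP : ∀ ℓ ∈ P, ℓ.Prime ∧ ℓ ≠ 2) {t : Option ℕ → ZMod 2} {x : ℤ}
    (hx₄ : χ₄ x = signOf (t none)) (hx₈ : χ₈ x = signOf (t (some 2))) {y : ℕ → ℤ}
    (hy : ∀ ℓ ∈ P, J(y ℓ | ℓ) = signOf (t (some ℓ) + (ℓ / 2 : ℕ) * t none)) {n : ℕ} (hn : Odd n)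
    (hnx : (n : ℤ) ≡ x [ZMOD 16]) (hny : ∀ ℓ ∈ P, (n : ℤ) ≡ y ℓ [ZMOD ℓ]) :
    J(-1 | n) = signOf (t none) ∧ ∀ ℓ ∈ insert 2 P, J(ℓ | n) = signOf (t (some ℓ)) := by
  have hn₄ : J(-1 | n) = signOf (t none) := by
    rw [jacobiSym.at_neg_one hn, ← hx₄]
    exact_mod_cast congrArg χ₄ ((ZMod.intCast_eq_intCast_iff _ _ 4).mpr (hnx.of_dvd (by norm_num)))
  refine ⟨hn₄, fun ℓ hℓ => ?_⟩
  rcases Finset.mem_insert.mp hℓ with rfl | hℓ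
  · rw [Nat.cast_ofNat, jacobiSym.at_two hn, ← hx₈]
    exact_mod_cast congrArg χ₈ ((ZMod.intCast_eq_intCast_iff _ _ 8).mpr (hnx.of_dvd (by norm_num)))
  · exact jacobiSym_eq_signOf_of_modEq ((hP ℓ hℓ).1.odd_of_ne_two (hP ℓ hℓ).2) hn (hny ℓ hℓ)
      ((jacobiSym.at_neg_one hn).symm.trans hn₄) (hy ℓ hℓ)

/-- Every nonzero square mod `3` is `1`, so for `ℓ = 3` only a nonresidue avoids `0` and `1`. -/
lemma exists_jacobiSym_eq_signOf {ℓ : ℕ} (hℓ : ℓ.Prime) (hℓ2 : ℓ ≠ 2) (s : ZMod 2)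
    (h3 : ℓ = 3 → s = 1) :
    ∃ y : ℤ, J(y | ℓ) = signOf s ∧ ¬(ℓ : ℤ) ∣ y ∧ ¬(ℓ : ℤ) ∣ y - 1 := by
  have : Fact ℓ.Prime := ⟨hℓ⟩
  rcases (by decide : ∀ s : ZMod 2, s = 0 ∨ s = 1) s with rfl | rfl
  · have hℓ3 : ℓ ≠ 3 := fun h => absurd (h3 h) (by decide)
    have hcop : Int.gcd 2 ℓ = 1 := by
      rw [show (2 : ℤ) = (2 : ℕ) from rfl, Int.gcd_natCast_natCast]
      exact (Nat.coprime_primes Nat.prime_two hℓ).mpr (Ne.symm hℓ2)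
    refine ⟨2 ^ 2, by simpa using jacobiSym.sq_one' hcop, fun h => hℓ2 ?_, fun h => hℓ3 ?_⟩
    · exact (Nat.prime_dvd_prime_iff_eq hℓ Nat.prime_two).mp
        (hℓ.dvd_of_dvd_pow (by exact_mod_cast h : ℓ ∣ 2 ^ 2))
    · norm_num at h
      exact (Nat.prime_dvd_prime_iff_eq hℓ Nat.prime_three).mp (by exact_mod_cast h)
  · obtain ⟨a, ha⟩ := FiniteField.exists_nonsquare (F := ZMod ℓ) (by rwa [ZMod.ringChar_zmod_n])
    refine ⟨a.valMinAbs, ZMod.nonsquare_iff_jacobiSym_eq_neg_one.mpr (by rwa [ZMod.coe_valMinAbs]),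
      fun h => ha ?_, fun h => ha ?_⟩
    · rw [← ZMod.intCast_zmod_eq_zero_iff_dvd, ZMod.coe_valMinAbs] at h
      exact h ▸ ⟨0, (mul_zero 0).symm⟩
    · rw [← ZMod.intCast_zmod_eq_zero_iff_dvd, Int.cast_sub, ZMod.coe_valMinAbs, Int.cast_one,
        sub_eq_zero] at h
      exact h ▸ IsSquare.one

lemma exists_residue_mod_sixteen (s₄ s₈ : ZMod 2) :
    ∃ x : ℤ, χ₄ x = signOf s₄ ∧ χ₈ x = signOf s₈ ∧
      ∃ T : ℤ, (T = 2 ∨ T = 4 ∨ T = 8) ∧ T ∣ x - 1 ∧ ¬2 * T ∣ x - 1 ∧ 2 * T ∣ 16 := by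
  rcases (by decide : ∀ s : ZMod 2, s = 0 ∨ s = 1) s₄ with rfl | rfl <;>
    rcases (by decide : ∀ s : ZMod 2, s = 0 ∨ s = 1) s₈ with rfl | rfl
  · exact ⟨9, by decide, by decide, 8, by norm_num⟩
  · exact ⟨5, by decide, by decide, 4, by norm_num⟩
  · exact ⟨7, by decide, by decide, 2, by norm_num⟩
  · exact ⟨3, by decide, by decide, 2, by norm_num⟩

lemma Int.exists_modEq_and_forall_modEq_prime {m : ℤ} (x : ℤ) {P : Finset ℕ} (y : ℕ → ℤ)
    (hP : ∀ ℓ ∈ P, ℓ.Prime) (hm : ∀ ℓ ∈ P, IsCoprime m ℓ) :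
    ∃ u : ℤ, u ≡ x [ZMOD m] ∧ ∀ ℓ ∈ P, u ≡ y ℓ [ZMOD ℓ] := by
  classical
  induction P using Finset.induction with
  | empty => exact ⟨x, rfl, by simp⟩
  | insert a P ha ih =>
    obtain ⟨u, hux, huy⟩ := ih (fun ℓ hℓ => hP ℓ (by simp [hℓ])) (fun ℓ hℓ => hm ℓ (by simp [hℓ]))
    have hcop : IsCoprime (m * ∏ ℓ ∈ P, (ℓ : ℤ)) a := by
      refine (hm a (by simp)).mul_left (IsCoprime.prod_left fun ℓ hℓ => ?_)
      exact Nat.isCoprime_iff_coprime.mpr <| (Nat.coprime_primes (hP ℓ (by simp [hℓ]))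
        (hP a (by simp))).mpr fun h => ha (h ▸ hℓ)
    obtain ⟨α, β, hαβ⟩ := hcop
    set M := m * ∏ ℓ ∈ P, (ℓ : ℤ)
    have hw : u * (β * a) + y a * (α * M) ≡ u [ZMOD M] :=
      Int.modEq_iff_dvd.mpr ⟨α * (u - y a), by linear_combination -u * hαβ⟩
    have hw' : u * (β * a) + y a * (α * M) ≡ y a [ZMOD a] :=
      Int.modEq_iff_dvd.mpr ⟨β * (y a - u), by linear_combination -y a * hαβ⟩
    refine ⟨_, (hw.of_mul_right _).trans hux, fun ℓ hℓ => ?_⟩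
    rcases Finset.mem_insert.mp hℓ with rfl | hℓ
    · exact hw'
    · exact (hw.of_dvd ((Finset.dvd_prod_of_mem _ hℓ).mul_left m)).trans (huy ℓ hℓ)

lemma isCoprime_sixteen_mul_prod {w : ℤ} {P : Finset ℕ} (hP : ∀ ℓ ∈ P, ℓ.Prime) (h2 : ¬2 ∣ w)
    (hℓ : ∀ ℓ ∈ P, ¬(ℓ : ℤ) ∣ w) : IsCoprime w (16 * ∏ ℓ ∈ P, (ℓ : ℤ)) := by
  refine IsCoprime.mul_right ?_ (IsCoprime.prod_right fun ℓ hℓ' => ?_)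
  · simpa using ((Int.prime_two.coprime_iff_not_dvd.mpr h2).symm.pow_right (n := 4))
  · exact ((Nat.prime_iff_prime_int.mp (hP ℓ hℓ')).coprime_iff_not_dvd.mpr (hℓ ℓ hℓ')).symm

lemma exists_residue_realizing_signs {P : Finset ℕ} (hP : ∀ ℓ ∈ P, ℓ.Prime ∧ ℓ ≠ 2)
    (t : Option ℕ → ZMod 2) (h3 : 3 ∈ P → t (some 3) + t none = 1) :
    ∃ u : ℤ, IsCoprime u (16 * ∏ ℓ ∈ P, (ℓ : ℤ)) ∧
      (∃ T : ℤ, (T = 2 ∨ T = 4 ∨ T = 8) ∧ T ∣ u - 1 ∧ ¬2 * T ∣ u - 1 ∧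
        IsCoprime ((u - 1) / T) (16 * ∏ ℓ ∈ P, (ℓ : ℤ))) ∧
      ∀ n : ℕ, (n : ℤ) ≡ u [ZMOD 16 * ∏ ℓ ∈ P, (ℓ : ℤ)] → Odd n ∧
        J(-1 | n) = signOf (t none) ∧ ∀ ℓ ∈ insert 2 P, J(ℓ | n) = signOf (t (some ℓ)) := by
  obtain ⟨x, hx₄, hx₈, T, hT, hTx, hTx', hT16⟩ := exists_residue_mod_sixteen (t none) (t (some 2))
  have hy : ∀ ℓ ∈ P, ∃ y : ℤ, J(y | ℓ) = signOf (t (some ℓ) + (ℓ / 2 : ℕ) * t none) ∧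
      ¬(ℓ : ℤ) ∣ y ∧ ¬(ℓ : ℤ) ∣ y - 1 := fun ℓ hℓ =>
    exists_jacobiSym_eq_signOf (hP ℓ hℓ).1 (hP ℓ hℓ).2 _ fun h => by subst h; simpa using h3 hℓ
  choose! y hy using hy
  obtain ⟨u, hux, huy⟩ := Int.exists_modEq_and_forall_modEq_prime (m := 16) x y
    (fun ℓ hℓ => (hP ℓ hℓ).1) fun ℓ hℓ => by
      simpa using Nat.isCoprime_iff_coprime.mpr <| Nat.Coprime.pow_left 4 <|
        (Nat.coprime_primes Nat.prime_two (hP ℓ hℓ).1).mpr (hP ℓ hℓ).2.symm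
  have hu1 : u - 1 ≡ x - 1 [ZMOD 16] := hux.sub_right 1
  have hTu : T ∣ u - 1 := (hu1.of_dvd (dvd_of_mul_left_dvd hT16)).dvd_iff.mpr hTx
  have hTu' : ¬2 * T ∣ u - 1 := fun h => hTx' ((hu1.of_dvd hT16).dvd_iff.mp h)
  have hu2 : ¬2 ∣ u := fun h => by
    have : 2 ∣ u - 1 := (by rcases hT with rfl | rfl | rfl <;> norm_num : (2 : ℤ) ∣ T).trans hTu
    omega
  have hPrime : ∀ ℓ ∈ P, ℓ.Prime := fun ℓ hℓ => (hP ℓ hℓ).1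
  refine ⟨u, isCoprime_sixteen_mul_prod hPrime hu2 fun ℓ hℓ h => (hy ℓ hℓ).2.1
    ((huy ℓ hℓ).dvd_iff.mp h), ⟨T, hT, hTu, hTu', ?_⟩, fun n hnu => ?_⟩
  · obtain ⟨w, hw⟩ := hTu
    have hT0 : T ≠ 0 := by rcases hT with rfl | rfl | rfl <;> norm_num
    rw [hw, Int.mul_ediv_cancel_left _ hT0]
    refine isCoprime_sixteen_mul_prod hPrime (fun h => hTu' (hw ▸ mul_comm 2 T ▸
      mul_dvd_mul_left T h)) fun ℓ hℓ h => (hy ℓ hℓ).2.2 ?_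
    exact ((huy ℓ hℓ).sub_right 1).dvd_iff.mp (hw ▸ h.mul_left T)
  have hnx : (n : ℤ) ≡ x [ZMOD 16] := (hnu.of_mul_right _).trans hux
  have hn : Odd n := by
    rw [← Int.odd_coe_nat, ← Int.not_even_iff_odd, even_iff_two_dvd,
      ((hnu.of_mul_right _).of_dvd (by norm_num : (2 : ℤ) ∣ 16)).dvd_iff]
    exact hu2
  exact ⟨hn, jacobiSym_eq_signOf_of_modEq_sixteen_mul_prod hP hx₄ hx₈ (fun ℓ hℓ => (hy ℓ hℓ).1)
    hn hnx fun ℓ hℓ => (hnu.of_dvd ((Finset.dvd_prod_of_mem _ hℓ).mul_left 16)).trans (huy ℓ hℓ)⟩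

theorem stmt4 {r : ℕ} (q : Fin r → ℤ) (hq : ∀ i, q i ≠ 0)
    (hstar : StarCondition q)
    (v : ℕ)
    (hv : v = 16 * ∏ ℓ ∈ (∏ i, q i).natAbs.primeFactors.filter (fun ℓ => ℓ ≠ 2), ℓ) :
    ∃ u : ℤ, IsCoprime u (v : ℤ) ∧
      (∀ p : ℕ, ∀ _ : Fact p.Prime, (p : ℤ) ≡ u [ZMOD (v : ℤ)] →
        ∀ i, legendreSym p (q i) = -1) ∧
      (∃ T : ℤ, (T = 2 ∨ T = 4 ∨ T = 8) ∧ T ∣ u - 1 ∧ ¬ (2 * T ∣ u - 1) ∧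
        IsCoprime ((u - 1) / T) (v : ℤ)) := by
  set P := (∏ i, q i).natAbs.primeFactors.filter (fun ℓ => ℓ ≠ 2) with hPdef
  have hP : ∀ ℓ ∈ P, ℓ.Prime ∧ ℓ ≠ 2 := fun ℓ hℓ => by
    simp only [hPdef, Finset.mem_filter, Nat.mem_primeFactors] at hℓ
    exact ⟨hℓ.1.1, hℓ.2⟩
  have hvP : (v : ℤ) = 16 * ∏ ℓ ∈ P, (ℓ : ℤ) := by rw [hv]; push_cast; rfl
  obtain ⟨t, ht⟩ := exists_expPairing_eq_one (fun o : Option (Fin r) => o.elim (-3) q)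
    (by rintro (_ | i) <;> simp [hq]) fun e he => by
      simpa [Fintype.sum_option] using
        hstar (e none) (fun i => e (some i)) (by simpa [Fintype.prod_option] using he)
  have htq : ∀ i, expPairing (q i) t = 1 := fun i => ht (some i)
  have h3 : 3 ∈ P → t (some 3) + t none = 1 := fun _ => by
    simpa [expPairing_apply, negBit, add_comm, Nat.prime_three.primeFactors,
      Nat.prime_three.factorization_self] using ht none
  obtain ⟨u, hu, hT, hJ⟩ := exists_residue_realizing_signs hP t h3
  refine ⟨u, hvP ▸ hu, fun p _ hpu i => ?_, hvP ▸ hT⟩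
  obtain ⟨hp, hneg, hprime⟩ := hJ p (hvP ▸ hpu)
  rw [jacobiSym.legendreSym.to_jacobiSym, jacobiSym_eq_signOf_expPairing (hq i) hneg
    fun ℓ hℓ => hprime ℓ ?_, htq i, signOf_one]
  rcases eq_or_ne ℓ 2 with rfl | h2
  · exact Finset.mem_insert_self 2 P
  refine Finset.mem_insert_of_mem (Finset.mem_filter.mpr ⟨Nat.primeFactors_mono ?_ ?_ hℓ, h2⟩)
  · exact Int.natAbs_dvd_natAbs.mpr (Finset.dvd_prod_of_mem q (Finset.mem_univ i))
  · exact Int.natAbs_ne_zero.mpr (Finset.prod_ne_zero_iff.mpr fun i _ => hq i)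
end

section
/- Let f ≥ 1 and let H be a proper subgroup of (ℤ/fℤ)^× with 1 ∈ H. If 3 | f, then there exists an integer u_0 coprime to f with u_0 mod f ∉ H and u_0 ≡ 2 (mod 3). -/
theorem stmt14 (f : ℕ) (hf : 1 ≤ f) (H : Subgroup (ZMod f)ˣ) (hH : H ≠ ⊤)
    (h3 : 3 ∣ f) :
    ∃ u₀ : ℤ, IsCoprime u₀ (f : ℤ) ∧
      (∀ w : (ZMod f)ˣ, (w : ZMod f) = ((u₀ : ℤ) : ZMod f) → w ∉ H) ∧
      u₀ ≡ 2 [ZMOD 3] := by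
  haveI : NeZero f := ⟨by omega⟩
  obtain ⟨u, hu⟩ : ∃ u : (ZMod f)ˣ, u ∉ H := by
    by_contra h
    push_neg at h
    exact hH ((Subgroup.eq_top_iff' H).mpr h)
  set φ : ZMod f →+* ZMod 3 := ZMod.castHom h3 (ZMod 3) with hφ
  have hcases : ∀ x : ZMod 3, IsUnit x → x = 1 ∨ x = 2 := by decide
  have key : ∃ v : (ZMod f)ˣ, v ∉ H ∧ φ (v : ZMod f) = 2 := by
    have hu3 := hcases (φ u) ((u.isUnit).map φ)
    rcases hu3 with h1 | h2
    · by_cases hneg : (-1 : (ZMod f)ˣ) ∈ H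
      · refine ⟨-u, ?_, ?_⟩
        · intro hmem
          exact hu (by simpa using H.mul_mem hneg hmem)
        · have : φ ((-u : (ZMod f)ˣ) : ZMod f) = -1 := by
            simp [h1]
          rw [this]; decide
      · refine ⟨-1, hneg, ?_⟩
        have : φ ((-1 : (ZMod f)ˣ) : ZMod f) = -1 := by simp
        rw [this]; decide
    · exact ⟨u, hu, h2⟩
  obtain ⟨v, hvH, hv3⟩ := key
  refine ⟨((v : ZMod f).val : ℤ), ?_, ?_, ?_⟩
  · rw [Int.isCoprime_iff_gcd_eq_one, Int.gcd_natCast_natCast]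
    exact ZMod.val_coe_unit_coprime v
  · intro w hw
    have hwv : (w : ZMod f) = (v : ZMod f) := by
      rwa [Int.cast_natCast, ZMod.natCast_val, ZMod.cast_id] at hw
    have : w = v := Units.ext hwv
    subst this
    exact hvH
  · have h2 : (((v : ZMod f).val : ℤ) : ZMod 3) = ((2 : ℤ) : ZMod 3) := by
      push_cast
      rw [ZMod.natCast_val]
      have := hv3
      rw [hφ, ZMod.castHom_apply] at this
      rw [this]

    exact (ZMod.intCast_eq_intCast_iff _ _ _).mp h2
end
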